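/- The denoising score matching objective equals the naive score matching objective plus a model-independent variance term: for every measurable ŝ : ℝ^D → ℝ^D such that all integrals below are finite, (1/M) Σ_{m=1}^M ∫_{ℝ^D} (1/2) ‖ ŝ(x) − s̃(x; μ_m) ‖² N(x; α μ_m, S) dx = ∫_{ℝ^D} (1/2) ‖ ŝ(x) − s(x) ‖² p(x) dx + ∫_{ℝ^D} (1/2) tr( C(x) ) p(x) dx. -/

import Mathlib

open Matrix MeasureTheory BigOperators

/-- Partial derivative of a scalar function on `ℝ^D` in coordinate `i`. -/
noncomputable def pderiv' {D : ℕ} (i : Fin D) (f : (Fin D → ℝ) → ℝ) (x : Fin D → ℝ) : ℝ :=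
  deriv (fun t => f (Function.update x i t)) (x i)

/-- Multivariate Gaussian density `N(x; m, S)`. -/
noncomputable def gaussDensity {D : ℕ} (S : Matrix (Fin D) (Fin D) ℝ) (m x : Fin D → ℝ) : ℝ :=
  ((2 * Real.pi) ^ D * S.det) ^ (-(1/2) : ℝ) *
    Real.exp (-((x - m) ⬝ᵥ S⁻¹.mulVec (x - m)) / 2)

/-- Noise-corrupted marginal `p(x) = (1/M) ∑ₘ N(x; α μₘ, S)`. -/
noncomputable def marginal {D M : ℕ} (μ : Fin M → Fin D → ℝ) (α : ℝ)
    (S : Matrix (Fin D) (Fin D) ℝ) (x : Fin D → ℝ) : ℝ :=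
  (M : ℝ)⁻¹ * ∑ m, gaussDensity S (α • μ m) x

/-- The score `s(x) = ∇ₓ log p(x)`. -/
noncomputable def score {D M : ℕ} (μ : Fin M → Fin D → ℝ) (α : ℝ)
    (S : Matrix (Fin D) (Fin D) ℝ) (x : Fin D → ℝ) : Fin D → ℝ :=
  fun i => pderiv' i (fun y => Real.log (marginal μ α S y)) x

/-- The proxy score `s̃(x; x₀) = S⁻¹ (α x₀ − x)`. -/
noncomputable def proxyScore {D : ℕ} (α : ℝ) (S : Matrix (Fin D) (Fin D) ℝ)
    (x x₀ : Fin D → ℝ) : Fin D → ℝ :=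
  S⁻¹.mulVec (α • x₀ - x)

/-- Posterior weights `wₘ(x) = N(x; α μₘ, S) / ∑ₘ' N(x; α μₘ', S)`. -/
noncomputable def postW {D M : ℕ} (μ : Fin M → Fin D → ℝ) (α : ℝ)
    (S : Matrix (Fin D) (Fin D) ℝ) (m : Fin M) (x : Fin D → ℝ) : ℝ :=
  gaussDensity S (α • μ m) x / ∑ m', gaussDensity S (α • μ m') x


/-- Proxy score covariance `C(x) = ∑ₘ wₘ(x) s̃(x;μₘ) s̃(x;μₘ)ᵀ − s(x) s(x)ᵀ`. -/
noncomputable def proxyCov {D M : ℕ} (μ : Fin M → Fin D → ℝ) (α : ℝ)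
    (S : Matrix (Fin D) (Fin D) ℝ) (x : Fin D → ℝ) : Matrix (Fin D) (Fin D) ℝ :=
  Matrix.of fun i j =>
    (∑ m, postW μ α S m x * (proxyScore α S x (μ m) i * proxyScore α S x (μ m) j)) -
      score μ α S x i * score μ α S x j



/- Auxiliary lemmas -/

lemma hasDerivAt_update' {D : ℕ} (x : Fin D → ℝ) (i j : Fin D) (t : ℝ) :
    HasDerivAt (fun s => Function.update x i s j) (if j = i then 1 else 0) t := by
  simp only [Function.update_apply]
  split_ifs with h
  · exact hasDerivAt_id t
  · exact hasDerivAt_const t _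

lemma hasDerivAt_quad {D : ℕ} (A : Matrix (Fin D) (Fin D) ℝ) (hA : Aᵀ = A) (c x : Fin D → ℝ)
    (i : Fin D) (t : ℝ) :
    HasDerivAt (fun s => (Function.update x i s - c) ⬝ᵥ A.mulVec (Function.update x i s - c))
      (2 * A.mulVec (Function.update x i t - c) i) t := by
  have hbase : ∀ j, HasDerivAt (fun s => Function.update x i s j - c j)
      (if j = i then 1 else 0) t := fun j => (hasDerivAt_update' x i j t).sub_const (c j)
  have h1 : HasDerivAt (fun s => ∑ j, (Function.update x i s j - c j) *
      ∑ k, A j k * (Function.update x i s k - c k))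
      (∑ j, ((if j = i then 1 else 0) * ∑ k, A j k * (Function.update x i t k - c k)
        + (Function.update x i t j - c j) * ∑ k, A j k * (if k = i then 1 else 0))) t := by
    apply HasDerivAt.fun_sum
    intro j _
    exact (hbase j).mul (HasDerivAt.fun_sum (fun k _ => (hbase k).const_mul (A j k)))
  have hfun : (fun s => ∑ j, (Function.update x i s j - c j) *
      ∑ k, A j k * (Function.update x i s k - c k)) =
      (fun s => (Function.update x i s - c) ⬝ᵥ A.mulVec (Function.update x i s - c)) := by
    funext s
    simp [dotProduct, Matrix.mulVec, Pi.sub_apply]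
  have hAt : ∀ j, A j i = A i j := fun j => congrFun (congrFun hA i) j
  have hval : (∑ j, ((if j = i then 1 else 0) * ∑ k, A j k * (Function.update x i t k - c k)
        + (Function.update x i t j - c j) * ∑ k, A j k * (if k = i then 1 else 0))) =
      2 * A.mulVec (Function.update x i t - c) i := by
    have h2 : ∀ j, (∑ k, A j k * (if k = i then (1:ℝ) else 0)) = A j i := by
      intro j; simp [mul_ite]
    simp only [h2, ite_mul, one_mul, zero_mul]
    rw [Finset.sum_add_distrib, Finset.sum_ite_eq' Finset.univ i]
    simp only [Finset.mem_univ, if_true, Matrix.mulVec, dotProduct, Pi.sub_apply]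
    rw [two_mul]
    congr 1
    refine Finset.sum_congr rfl (fun j _ => ?_)
    rw [hAt j]; ring
  rw [← hfun, ← hval]
  exact h1

lemma gaussDensity_pos {D : ℕ} {S : Matrix (Fin D) (Fin D) ℝ} (hS : S.PosDef)
    (c x : Fin D → ℝ) : 0 < gaussDensity S c x := by
  unfold gaussDensity
  apply mul_pos
  · exact Real.rpow_pos_of_pos (mul_pos (pow_pos (by positivity) D) hS.det_pos) _
  · exact Real.exp_pos _

lemma inv_symm {D : ℕ} {S : Matrix (Fin D) (Fin D) ℝ} (hS : S.PosDef) : (S⁻¹)ᵀ = S⁻¹ := by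
  rw [Matrix.transpose_nonsing_inv]
  congr 1
  have := hS.isHermitian.eq
  simpa [Matrix.conjTranspose_eq_transpose_of_trivial] using this

lemma hasDerivAt_gauss {D : ℕ} {S : Matrix (Fin D) (Fin D) ℝ} (hS : S.PosDef)
    (c x : Fin D → ℝ) (i : Fin D) (t : ℝ) :
    HasDerivAt (fun s => gaussDensity S c (Function.update x i s))
      (gaussDensity S c (Function.update x i t) *
        S⁻¹.mulVec (c - Function.update x i t) i) t := by
  have hq := hasDerivAt_quad S⁻¹ (inv_symm hS) c x i t
  have h := (((hq.neg).div_const 2).exp).const_mul (((2*Real.pi)^D * S.det) ^ (-(1/2):ℝ))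
  have hneg : S⁻¹.mulVec (c - Function.update x i t) i =
      -(S⁻¹.mulVec (Function.update x i t - c) i) := by
    rw [show c - Function.update x i t = -(Function.update x i t - c) by ring,
      Matrix.mulVec_neg]
    rfl
  exact h.congr_deriv (by unfold gaussDensity; rw [hneg]; simp only [Pi.neg_apply]; ring)

lemma sum_gauss_pos {D M : ℕ} (hM : 1 ≤ M) (μ : Fin M → Fin D → ℝ) (α : ℝ)
    {S : Matrix (Fin D) (Fin D) ℝ} (hS : S.PosDef) (x : Fin D → ℝ) :
    0 < ∑ m', gaussDensity S (α • μ m') x := by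
  have : Nonempty (Fin M) := Fin.pos_iff_nonempty.mp hM
  exact Finset.sum_pos (fun m _ => gaussDensity_pos hS _ _) Finset.univ_nonempty

lemma marginal_pos {D M : ℕ} (hM : 1 ≤ M) (μ : Fin M → Fin D → ℝ) (α : ℝ)
    {S : Matrix (Fin D) (Fin D) ℝ} (hS : S.PosDef) (x : Fin D → ℝ) :
    0 < marginal μ α S x := by
  unfold marginal
  have hMne : (0:ℝ) < (M:ℝ) := by exact_mod_cast hM
  exact mul_pos (inv_pos.mpr hMne) (sum_gauss_pos hM μ α hS x)

lemma score_eq {D M : ℕ} (hM : 1 ≤ M) (μ : Fin M → Fin D → ℝ) (α : ℝ)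
    {S : Matrix (Fin D) (Fin D) ℝ} (hS : S.PosDef) (x : Fin D → ℝ) (i : Fin D) :
    score μ α S x i = ∑ m, postW μ α S m x * proxyScore α S x (μ m) i := by
  have hMne : ((M:ℝ))⁻¹ ≠ 0 := by
    apply inv_ne_zero; exact_mod_cast Nat.one_le_iff_ne_zero.mp hM
  have hF : HasDerivAt (fun s => marginal μ α S (Function.update x i s))
      ((M:ℝ)⁻¹ * ∑ m, gaussDensity S (α • μ m) x * S⁻¹.mulVec (α • μ m - x) i) (x i) := by
    have h := (HasDerivAt.fun_sum (fun m (_ : m ∈ Finset.univ) =>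
      hasDerivAt_gauss hS (α • μ m) x i (x i))).const_mul (M:ℝ)⁻¹
    simp only [Function.update_eq_self] at h
    exact h
  have hpos := marginal_pos hM μ α hS x
  have hlog := hF.log (by simpa [Function.update_eq_self] using hpos.ne')
  unfold score pderiv'
  rw [hlog.deriv]
  simp only [Function.update_eq_self]
  unfold marginal proxyScore postW
  rw [mul_div_mul_left _ _ hMne]
  rw [Finset.sum_div]
  exact Finset.sum_congr rfl (fun m _ => by rw [div_mul_eq_mul_div])

lemma per_coord {M : ℕ} (N b : Fin M → ℝ) (a T : ℝ) (hT : T = ∑ m, N m) (hTpos : 0 < T) :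
    ∑ m, (1/2:ℝ) * (a - b m)^2 * N m
    = (1/2:ℝ) * (a - (∑ m, (N m / T) * b m))^2 * T
    + ((1/2:ℝ) * ((∑ m, (N m / T) * (b m * b m)) - (∑ m, (N m / T) * b m)^2)) * T := by
  have hT0 : T ≠ 0 := hTpos.ne'
  have hA : ∑ m, (N m / T) * b m = (∑ m, N m * b m) / T := by
    rw [Finset.sum_div]; exact Finset.sum_congr rfl fun m _ => div_mul_eq_mul_div _ _ _
  have hB : ∑ m, (N m / T) * (b m * b m) = (∑ m, N m * (b m * b m)) / T := by
    rw [Finset.sum_div]; exact Finset.sum_congr rfl fun m _ => div_mul_eq_mul_div _ _ _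
  have hL : ∑ m, (1/2:ℝ) * (a - b m)^2 * N m
      = (1/2)*a^2*(∑ m, N m) - a*(∑ m, N m * b m) + (1/2)*(∑ m, N m * (b m * b m)) := by
    rw [Finset.sum_congr rfl (fun m _ => show (1/2:ℝ) * (a - b m)^2 * N m
      = (1/2)*a^2*(N m) - a*(N m * b m) + (1/2)*(N m * (b m * b m)) from by ring)]
    rw [Finset.sum_add_distrib, Finset.sum_sub_distrib, ← Finset.mul_sum, ← Finset.mul_sum,
      ← Finset.mul_sum]
  rw [hL, hA, hB, ← hT]
  field_simp
  ring

lemma pointwise_eq {D M : ℕ} (hM : 1 ≤ M) (μ : Fin M → Fin D → ℝ) (α : ℝ)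
    {S : Matrix (Fin D) (Fin D) ℝ} (hS : S.PosDef) (shat : (Fin D → ℝ) → Fin D → ℝ)
    (x : Fin D → ℝ) :
    (M:ℝ)⁻¹ * ∑ m, ((1/2:ℝ) *
        ((shat x - proxyScore α S x (μ m)) ⬝ᵥ (shat x - proxyScore α S x (μ m))) *
        gaussDensity S (α • μ m) x)
    = (1/2:ℝ) * ((shat x - score μ α S x) ⬝ᵥ (shat x - score μ α S x)) * marginal μ α S x
    + (1/2:ℝ) * (proxyCov μ α S x).trace * marginal μ α S x := by
  have hTpos : 0 < ∑ m', gaussDensity S (α • μ m') x := sum_gauss_pos hM μ α hS x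
  set N : Fin M → ℝ := fun m => gaussDensity S (α • μ m) x with hN
  set T : ℝ := ∑ m, N m with hT
  set st : Fin M → Fin D → ℝ := fun m => proxyScore α S x (μ m) with hst
  set sh : Fin D → ℝ := shat x with hsh
  have hW : ∀ m, postW μ α S m x = N m / T := fun m => rfl
  have hs : ∀ i, score μ α S x i = ∑ m, (N m / T) * st m i := by
    intro i
    rw [score_eq hM μ α hS x i]
    exact Finset.sum_congr rfl fun m _ => by rw [hW]
  have hmarg : marginal μ α S x = (M:ℝ)⁻¹ * T := rfl
  have htr : (proxyCov μ α S x).trace =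
      ∑ i, ((∑ m, (N m / T) * (st m i * st m i)) -
        (∑ m, (N m / T) * st m i) * (∑ m, (N m / T) * st m i)) := by
    unfold Matrix.trace proxyCov
    refine Finset.sum_congr rfl fun i _ => ?_
    simp only [Matrix.diag_apply, Matrix.of_apply, hW, hs]
    rfl
  rw [hmarg, htr]
  have hsub : ∀ (v : Fin D → ℝ) (i : Fin D), (sh - v) i = sh i - v i := fun v i => rfl
  simp only [dotProduct, hsub, hs]
  have hLHS : ∑ m, ((1/2:ℝ) * (∑ i, (sh i - st m i) * (sh i - st m i)) * N m)
      = ∑ i, ∑ m, (1/2:ℝ) * (sh i - st m i)^2 * N m := by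
    rw [Finset.sum_comm]
    refine Finset.sum_congr rfl fun m _ => ?_
    rw [Finset.mul_sum, Finset.sum_mul]
    exact Finset.sum_congr rfl fun i _ => by ring
  rw [hLHS]
  have hRHS : ∀ i, ∑ m, (1/2:ℝ) * (sh i - st m i)^2 * N m
      = (1/2:ℝ) * ((sh i - ∑ m, (N m / T) * st m i) * (sh i - ∑ m, (N m / T) * st m i)) * T
      + (1/2:ℝ) * ((∑ m, (N m / T) * (st m i * st m i)) -
          (∑ m, (N m / T) * st m i) * (∑ m, (N m / T) * st m i)) * T := by
    intro i
    have := per_coord N (fun m => st m i) (sh i) T hT hTpos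
    rw [this]; ring
  rw [Finset.sum_congr rfl (fun i _ => hRHS i)]
  rw [Finset.sum_add_distrib, mul_add]
  congr 1
  · rw [Finset.mul_sum, Finset.mul_sum, Finset.sum_mul]
    refine Finset.sum_congr rfl fun i _ => by ring
  · rw [Finset.mul_sum, Finset.mul_sum, Finset.sum_mul]
    refine Finset.sum_congr rfl fun i _ => by ring

/-- the denoising score matching objective equals the naive score matching
objective plus a model-independent variance term:
`(1/M) ∑ₘ ∫ ½‖ŝ(x) − s̃(x;μₘ)‖² N(x; αμₘ, S) dx
  = ∫ ½‖ŝ(x) − s(x)‖² p(x) dx + ∫ ½ tr(C(x)) p(x) dx`. -/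
theorem dsm_eq_naive_plus_variance {D M : ℕ} (hD : 1 ≤ D) (hM : 1 ≤ M)
    (μ : Fin M → Fin D → ℝ) (α : ℝ) (hα : 0 < α)
    (S : Matrix (Fin D) (Fin D) ℝ) (hS : S.PosDef)
    (shat : (Fin D → ℝ) → Fin D → ℝ) (hmeas : Measurable shat)
    (hint₁ : ∀ m : Fin M,
      Integrable (fun x : Fin D → ℝ =>
        (1 / 2 : ℝ) *
            ((shat x - proxyScore α S x (μ m)) ⬝ᵥ (shat x - proxyScore α S x (μ m))) *
          gaussDensity S (α • μ m) x))
    (hint₂ : Integrable (fun x : Fin D → ℝ =>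
      (1 / 2 : ℝ) * ((shat x - score μ α S x) ⬝ᵥ (shat x - score μ α S x)) *
        marginal μ α S x))
    (hint₃ : Integrable (fun x : Fin D → ℝ =>
      (1 / 2 : ℝ) * (proxyCov μ α S x).trace * marginal μ α S x)) :
    (M : ℝ)⁻¹ *
        ∑ m, ∫ x : Fin D → ℝ,
          (1 / 2 : ℝ) *
              ((shat x - proxyScore α S x (μ m)) ⬝ᵥ (shat x - proxyScore α S x (μ m))) *
            gaussDensity S (α • μ m) x =
      (∫ x : Fin D → ℝ,
          (1 / 2 : ℝ) * ((shat x - score μ α S x) ⬝ᵥ (shat x - score μ α S x)) *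
            marginal μ α S x) +
        ∫ x : Fin D → ℝ,
          (1 / 2 : ℝ) * (proxyCov μ α S x).trace * marginal μ α S x := by
  rw [← integral_finset_sum Finset.univ (fun m _ => hint₁ m)]
  rw [← MeasureTheory.integral_const_mul]
  rw [← integral_add hint₂ hint₃]
  exact integral_congr_ae (Filter.Eventually.of_forall
    (fun x => pointwise_eq hM μ α hS shat x))
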